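/- Let k = [[1,0],[0,−1]] and define ψ : sl(2,ℝ) → sl(2,ℝ) by ψ(α) = k·α·k. Then ψ∘ψ = Id, for all α, γ ∈ sl(2,ℝ) one has g((α,ψ(α)), J(γ,ψ(γ))) = 0, and furthermore P(i,ψ(i)) = −(i,ψ(i)), P(j,ψ(j)) = −(j,ψ(j)), P(k,ψ(k)) = (k,ψ(k)), where i = [[0,1],[−1,0]] and j = [[0,1],[1,0]]. (This is the algebraic content of the facts that the immersion u ↦ (u, k·u·k) of SL(2,ℝ) into SL(2,ℝ)×SL(2,ℝ) is Lagrangian with constant angle functions (π,π,0).) -/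

import Mathlib

open Matrix

/-- The indefinite inner product `⟨a,b⟩ = -(1/2)·Trace(adj(a)·b)` on 2×2 real matrices. -/
noncomputable def ip (a b : Matrix (Fin 2) (Fin 2) ℝ) : ℝ :=
  -(1/2 : ℝ) * (a.adjugate * b).trace

/-- The product metric `⟨(α,β),(γ,δ)⟩_E = ⟨α,γ⟩ + ⟨β,δ⟩`. -/
noncomputable def ipE (X Y : Matrix (Fin 2) (Fin 2) ℝ × Matrix (Fin 2) (Fin 2) ℝ) : ℝ :=
  ip X.1 Y.1 + ip X.2 Y.2

/-- The nearly Kähler metric `g`. -/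
noncomputable def g (X Y : Matrix (Fin 2) (Fin 2) ℝ × Matrix (Fin 2) (Fin 2) ℝ) : ℝ :=
  (2/3 : ℝ) * ipE X Y - (1/3 : ℝ) * ipE (X.2, X.1) Y

/-- The almost complex structure `J(α,β) = (1/√3)·(α − 2β, 2α − β)`. -/
noncomputable def Jmap (X : Matrix (Fin 2) (Fin 2) ℝ × Matrix (Fin 2) (Fin 2) ℝ) :
    Matrix (Fin 2) (Fin 2) ℝ × Matrix (Fin 2) (Fin 2) ℝ :=
  (Real.sqrt 3)⁻¹ • (X.1 - (2:ℝ) • X.2, (2:ℝ) • X.1 - X.2)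

/-- The almost product structure `P(α,β) = (β,α)`. -/
def Pmap (X : Matrix (Fin 2) (Fin 2) ℝ × Matrix (Fin 2) (Fin 2) ℝ) :
    Matrix (Fin 2) (Fin 2) ℝ × Matrix (Fin 2) (Fin 2) ℝ :=
  (X.2, X.1)

/-- The cross product `α×β = (1/2)(αβ − βα)` on `sl(2,ℝ)`. -/
noncomputable def cross (a b : Matrix (Fin 2) (Fin 2) ℝ) : Matrix (Fin 2) (Fin 2) ℝ :=
  (1/2 : ℝ) • (a * b - b * a)

/-- The tensor `G`. -/
noncomputable def Gmap (X Y : Matrix (Fin 2) (Fin 2) ℝ × Matrix (Fin 2) (Fin 2) ℝ) :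
    Matrix (Fin 2) (Fin 2) ℝ × Matrix (Fin 2) (Fin 2) ℝ :=
  (2 / (3 * Real.sqrt 3)) •
    (-(cross X.1 Y.1) - cross X.1 Y.2 + cross Y.1 X.2 + (2:ℝ) • cross X.2 Y.2,
     -((2:ℝ) • cross X.1 Y.1) + cross X.1 Y.2 - cross Y.1 X.2 + cross X.2 Y.2)

/-! Since `adj k = -k`, the involution `ψ α = k α k` is self-adjoint for `⟨·,·⟩`. Expanding,
`g((α,β), J(γ,δ)) = (⟨β,γ⟩ - ⟨α,δ⟩)/√3`, which therefore vanishes on the graph of `ψ`. The matrices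
`i` and `j` anticommute with `k`, so `ψ` negates them, while `ψ k = k³ = k`. -/

theorem mul_mul_mul_mul_of_mul_self_eq_one {M : Type*} [Monoid M] {k : M} (hk : k * k = 1)
    (a : M) : k * (k * a * k) * k = a := by
  rw [← mul_assoc, ← mul_assoc, hk, one_mul, mul_assoc, hk, mul_one]

theorem ip_add_right (a b c : Matrix (Fin 2) (Fin 2) ℝ) : ip a (b + c) = ip a b + ip a c := by
  simp only [ip, Matrix.mul_add, Matrix.trace_add]
  ring

theorem ip_smul_right (a b : Matrix (Fin 2) (Fin 2) ℝ) (r : ℝ) : ip a (r • b) = r * ip a b := by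
  simp only [ip, Matrix.mul_smul, Matrix.trace_smul, smul_eq_mul]
  ring

theorem ip_sub_right (a b c : Matrix (Fin 2) (Fin 2) ℝ) : ip a (b - c) = ip a b - ip a c := by
  rw [sub_eq_add_neg, ← neg_one_smul ℝ c, ip_add_right, ip_smul_right]
  ring

theorem ip_mul_mul_left (k a b : Matrix (Fin 2) (Fin 2) ℝ) :
    ip (k * a * k) b = ip a (k.adjugate * b * k.adjugate) := by
  simp only [ip, Matrix.adjugate_mul_distrib, Matrix.mul_assoc]
  rw [Matrix.trace_mul_comm k.adjugate]
  simp only [Matrix.mul_assoc]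

theorem g_Jmap (α β γ δ : Matrix (Fin 2) (Fin 2) ℝ) :
    g (α, β) (Jmap (γ, δ)) = (Real.sqrt 3)⁻¹ * (ip β γ - ip α δ) := by
  simp only [g, ipE, Jmap, Prod.smul_mk, ip_smul_right, ip_sub_right]
  ring

/-- The immersion `u ↦ (u, k·u·k)` is Lagrangian with constant angle functions `(π,π,0)`. -/
theorem stmt_15 :
    let i : Matrix (Fin 2) (Fin 2) ℝ := !![0, 1; -1, 0]
    let j : Matrix (Fin 2) (Fin 2) ℝ := !![0, 1; 1, 0]
    let k : Matrix (Fin 2) (Fin 2) ℝ := !![1, 0; 0, -1]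
    let ψ : Matrix (Fin 2) (Fin 2) ℝ → Matrix (Fin 2) (Fin 2) ℝ := fun α => k * α * k
    (∀ α : Matrix (Fin 2) (Fin 2) ℝ, α.trace = 0 → ψ (ψ α) = α) ∧
    (∀ α γ : Matrix (Fin 2) (Fin 2) ℝ, α.trace = 0 → γ.trace = 0 →
      g (α, ψ α) (Jmap (γ, ψ γ)) = 0) ∧
    Pmap (i, ψ i) = -(i, ψ i) ∧
    Pmap (j, ψ j) = -(j, ψ j) ∧
    Pmap (k, ψ k) = (k, ψ k) := by
  intro i j k ψ
  have hkk : k * k = 1 := by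
    simp only [k, Matrix.mul_fin_two, Matrix.one_fin_two]; norm_num
  have hadj : k.adjugate = -k := by
    simp only [k, Matrix.adjugate_fin_two, Matrix.neg_of, Matrix.of_apply]; norm_num
  have hψi : ψ i = -i := by
    simp only [ψ, i, k, Matrix.mul_fin_two]; norm_num
  have hψj : ψ j = -j := by
    simp only [ψ, j, k, Matrix.mul_fin_two]; norm_num
  have hψk : ψ k = k := by
    simp only [ψ, hkk, Matrix.one_mul]
  refine ⟨fun α _ => mul_mul_mul_mul_of_mul_self_eq_one hkk α, fun α γ _ _ => ?_, ?_, ?_, ?_⟩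
  · rw [g_Jmap, ip_mul_mul_left, hadj, Matrix.neg_mul, neg_mul_neg, sub_self,
      mul_zero]
  all_goals simp only [Pmap, hψi, hψj, hψk, Prod.neg_mk, neg_neg]
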